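/- arXiv:1602.01429 — 9 statements merged into one kernel-verified Lean document; each statement's English description precedes it below -/
import Mathlib

section
/- Let $x_1,\dots,x_n$ be real numbers with $\sum_{i=1}^n x_i = 0$ and $x_i \le s$ for all $i$, where $s > 0$. Then $\sum_{i=1}^n x_i^3 \le \frac{s(n-2)}{n-1} \sum_{i=1}^n x_i^2$. -/
/-!
Let `M = x j` be the largest of the `x i` and `t = M / (n - 1)`. Summing the nonnegative terms
`(M - x i) * (x i + t) ^ 2` and using `∑ x i = 0` gives
`∑ x i ^ 3 ≤ (M - 2 t) ∑ x i ^ 2 + n M t ^ 2`, while the single term `(x j + t) ^ 2 = (n t) ^ 2` of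
`∑ (x i + t) ^ 2 = ∑ x i ^ 2 + n t ^ 2` gives `n (n - 1) t ^ 2 ≤ ∑ x i ^ 2`. Together they yield
`∑ x i ^ 3 ≤ (M - t) ∑ x i ^ 2 = M (n - 2) / (n - 1) ∑ x i ^ 2`, and `M ≤ s`.
Equality holds for `x = (s, -t, …, -t)`, which is where the choice of `t` comes from.
-/

open Finset

variable {ι : Type*} [Fintype ι]

lemma sum_cube_le_of_forall_le {x : ι → ℝ} {M : ℝ} (hsum : ∑ i, x i = 0) (hle : ∀ i, x i ≤ M)
    (t : ℝ) :
    ∑ i, x i ^ 3 ≤ (M - 2 * t) * ∑ i, x i ^ 2 + Fintype.card ι * M * t ^ 2 := by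
  have hterm : ∀ i, (M - x i) * (x i + t) ^ 2
      = (M - 2 * t) * x i ^ 2 - x i ^ 3 + (2 * M * t - t ^ 2) * x i + M * t ^ 2 := fun i => by
    ring
  have hnonneg : 0 ≤ ∑ i, (M - x i) * (x i + t) ^ 2 :=
    sum_nonneg fun i _ => mul_nonneg (sub_nonneg.2 (hle i)) (sq_nonneg _)
  simp only [hterm, sum_add_distrib, sum_sub_distrib, ← mul_sum, hsum, sum_const, card_univ,
    nsmul_eq_mul] at hnonneg
  linarith

lemma sq_add_le_sum_sq_add_card_mul_sq {x : ι → ℝ} (hsum : ∑ i, x i = 0) (j : ι) (t : ℝ) :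
    (x j + t) ^ 2 ≤ ∑ i, x i ^ 2 + Fintype.card ι * t ^ 2 := by
  have hexpand : ∑ i, (x i + t) ^ 2 = ∑ i, x i ^ 2 + Fintype.card ι * t ^ 2 := by
    simp only [add_sq, sum_add_distrib, ← sum_mul, ← mul_sum, hsum, sum_const, card_univ,
      nsmul_eq_mul]
    ring
  exact hexpand ▸ single_le_sum (fun i _ => sq_nonneg (x i + t)) (mem_univ j)

lemma sum_cube_le_max_mul_sum_sq {x : ι → ℝ} (hcard : 1 < Fintype.card ι)
    (hsum : ∑ i, x i = 0) {j : ι} (hmax : ∀ i, x i ≤ x j) :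
    ∑ i, x i ^ 3 ≤ x j * (Fintype.card ι - 2) / (Fintype.card ι - 1) * ∑ i, x i ^ 2 := by
  set m : ℝ := (Fintype.card ι : ℝ)
  set M := x j
  set Q := ∑ i, x i ^ 2
  have hm : 0 < m - 1 := by simp only [m, sub_pos, Nat.one_lt_cast, hcard]
  have hM : 0 ≤ M := by
    have := sum_le_sum fun i (_ : i ∈ univ) => hmax i
    simp only [hsum, sum_const, card_univ, nsmul_eq_mul] at this
    exact nonneg_of_mul_nonneg_right this (by positivity)
  set t := M / (m - 1)
  have ht : 0 ≤ t := div_nonneg hM hm.le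
  have hMt : M = (m - 1) * t := (mul_div_cancel₀ M hm.ne').symm
  have hQ : m * (m - 1) * t ^ 2 ≤ Q := by
    have : (M + t) ^ 2 ≤ Q + m * t ^ 2 := sq_add_le_sum_sq_add_card_mul_sq hsum j t
    rw [hMt] at this
    nlinarith
  calc ∑ i, x i ^ 3 ≤ (M - 2 * t) * Q + m * M * t ^ 2 := sum_cube_le_of_forall_le hsum hmax t
    _ = (M - 2 * t) * Q + t * (m * (m - 1) * t ^ 2) := by rw [hMt]; ring
    _ ≤ (M - 2 * t) * Q + t * Q := by gcongr
    _ = M * (m - 2) / (m - 1) * Q := by rw [hMt]; field_simp; ring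

theorem stmt_0_general (n : ℕ) (hn : 2 ≤ n) (s : ℝ) (x : Fin n → ℝ)
    (hsum : ∑ i, x i = 0) (hbd : ∀ i, x i ≤ s) :
    ∑ i, (x i) ^ 3 ≤ s * (n - 2) / (n - 1) * ∑ i, (x i) ^ 2 := by
  have : Nonempty (Fin n) := ⟨⟨0, by omega⟩⟩
  obtain ⟨j, hmax⟩ := Finite.exists_max x
  have hcard : 1 < Fintype.card (Fin n) := by rw [Fintype.card_fin]; omega
  have hn' : (2 : ℝ) ≤ n := by exact_mod_cast hn
  calc ∑ i, x i ^ 3 ≤ x j * (n - 2) / (n - 1) * ∑ i, x i ^ 2 := by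
        simpa only [Fintype.card_fin] using sum_cube_le_max_mul_sum_sq hcard hsum hmax
    _ ≤ s * (n - 2) / (n - 1) * ∑ i, x i ^ 2 := by
        gcongr
        · linarith
        · exact hbd j

theorem stmt_0 (n : ℕ) (hn : 2 ≤ n) (s : ℝ) (hs : 0 < s) (x : Fin n → ℝ)
    (hsum : ∑ i, x i = 0) (hbd : ∀ i, x i ≤ s) :
    ∑ i, (x i) ^ 3 ≤ s * (n - 2) / (n - 1) * ∑ i, (x i) ^ 2 :=
  stmt_0_general n hn s x hsum hbd
end

section
/- Let $\lambda_1 \ge \lambda_2 \ge \lambda_3$ be real numbers with $\lambda_1 + \lambda_2 + \lambda_3 = 0$, and let $S > 0$. Suppose $\lambda_1 \ge S/6$ and $\lambda_3 \le -\frac{\lambda_1}{2} - \lambda_1 \sqrt{\frac{3(\lambda_1 - S/6)}{4(3\lambda_1 + S/6)}}$. Then $S(\lambda_1^2 + \lambda_2^2 + \lambda_3^2) \ge 36 \lambda_1 \lambda_2 \lambda_3$. -/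
/-!
Eliminating `l2 = -l1 - l3` and writing `t = l3 + l1 / 2`, the gap
`S (l1² + l2² + l3²) - 36 l1 l2 l3` equals `3 (4 (3 l1 + S/6) t² - 3 l1² (l1 - S/6))`.
The hypothesis on `l3` says `t ≤ -l1 √(3 (l1 - S/6) / (4 (3 l1 + S/6)))`; squaring it
(both sides are nonpositive) gives exactly the nonnegativity of the bracket.
-/

lemma sq_mul_le_mul_sq_of_le_neg_mul_sqrt_div {x t n d : ℝ} (hx : 0 ≤ x) (hd : 0 < d)
    (h : t ≤ -(x * √(n / d))) : x ^ 2 * n ≤ d * t ^ 2 := by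
  rcases lt_or_ge n 0 with hn | hn
  · nlinarith [sq_nonneg t]
  · have hsq : (x * √(n / d)) ^ 2 ≤ t ^ 2 := by
      have := mul_nonneg hx (Real.sqrt_nonneg (n / d))
      nlinarith
    rw [mul_pow, Real.sq_sqrt (div_nonneg hn hd.le)] at hsq
    calc x ^ 2 * n = d * (x ^ 2 * (n / d)) := by field_simp
      _ ≤ d * t ^ 2 := mul_le_mul_of_nonneg_left hsq hd.le

lemma sum_sq_mul_sub_mul_prod_of_add_eq_zero {l1 l2 l3 S : ℝ} (hsum : l1 + l2 + l3 = 0) :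
    S * (l1 ^ 2 + l2 ^ 2 + l3 ^ 2) - 36 * (l1 * l2 * l3)
      = 3 * (4 * (3 * l1 + S / 6) * (l3 + l1 / 2) ^ 2 - l1 ^ 2 * (3 * (l1 - S / 6))) := by
  obtain rfl : l2 = -l1 - l3 := by linarith
  ring

theorem stmt_2_general (l1 l2 l3 S : ℝ)
    (hsum : l1 + l2 + l3 = 0) (hS : 0 < S) (h1 : S / 6 ≤ l1)
    (h3 : l3 ≤ -(l1 / 2) - l1 * Real.sqrt (3 * (l1 - S / 6) / (4 * (3 * l1 + S / 6)))) :
    36 * (l1 * l2 * l3) ≤ S * (l1 ^ 2 + l2 ^ 2 + l3 ^ 2) := by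
  have key : l1 ^ 2 * (3 * (l1 - S / 6)) ≤ 4 * (3 * l1 + S / 6) * (l3 + l1 / 2) ^ 2 :=
    sq_mul_le_mul_sq_of_le_neg_mul_sqrt_div (by linarith) (by linarith) (by linarith)
  linarith [sum_sq_mul_sub_mul_prod_of_add_eq_zero (S := S) hsum]

theorem stmt_2 (l1 l2 l3 S : ℝ) (h12 : l2 ≤ l1) (h23 : l3 ≤ l2)
    (hsum : l1 + l2 + l3 = 0) (hS : 0 < S) (h1 : S / 6 ≤ l1)
    (h3 : l3 ≤ -(l1 / 2) - l1 * Real.sqrt (3 * (l1 - S / 6) / (4 * (3 * l1 + S / 6)))) :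
    36 * (l1 * l2 * l3) ≤ S * (l1 ^ 2 + l2 ^ 2 + l3 ^ 2) :=
  stmt_2_general l1 l2 l3 S hsum hS h1 h3
end

section
/- Let $\mu_1, \mu_2, \mu_3$ be real numbers with $\mu_1 + \mu_2 + \mu_3 = 3$ and $\mu_1 \ge \mu_2 \ge \mu_3$, $\mu_1 > 3$, $\mu_3 < 0$. Define $S_2 = \mu_1\mu_2 + \mu_2\mu_3 + \mu_1\mu_3$ and $S_3 = \mu_1\mu_2\mu_3$. If $\mu_3 \le -\frac{\mu_1 - 3}{2} - (\mu_1 - 1)\sqrt{\frac{3(\mu_1-3)}{4(3\mu_1-1)}}$, then $S_2 - 3S_3 \ge 0$. -/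
/-!
Eliminating `m2 = 3 - m1 - m3`, the quantity `S₂ - 3 S₃` is a quadratic in `m3` with leading
coefficient `3 m1 - 1 > 0`, vertex at `-(m1 - 3) / 2` and roots at distance
`(m1 - 1) √(3 (m1 - 3) / (4 (3 m1 - 1)))` from the vertex. The hypothesis puts `m3` left of the
smaller root.
-/

lemma sigma2_sub_three_sigma3_eq (a x : ℝ) (ha : 3 * a - 1 ≠ 0) :
    (a * (3 - a - x) + (3 - a - x) * x + a * x) - 3 * (a * (3 - a - x) * x)
      = (3 * a - 1) *
          ((x + (a - 3) / 2) ^ 2 - ((a - 1) ^ 2 * (3 * (a - 3) / (4 * (3 * a - 1))))) := by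
  have hcancel : (3 * a - 1) * (3 * (a - 3) / (4 * (3 * a - 1))) = 3 * (a - 3) / 4 := by
    field_simp
  linear_combination (a - 1) ^ 2 * hcancel

theorem stmt_3_general (m1 m2 m3 : ℝ) (hsum : m1 + m2 + m3 = 3)
    (h1 : 3 < m1)
    (hcond : m3 ≤ -((m1 - 3) / 2) - (m1 - 1) * Real.sqrt (3 * (m1 - 3) / (4 * (3 * m1 - 1)))) :
    0 ≤ (m1 * m2 + m2 * m3 + m1 * m3) - 3 * (m1 * m2 * m3) := by
  obtain rfl : m2 = 3 - m1 - m3 := by linarith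
  have hroot : (m1 - 1) ^ 2 * (3 * (m1 - 3) / (4 * (3 * m1 - 1)))
      = ((m1 - 1) * Real.sqrt (3 * (m1 - 3) / (4 * (3 * m1 - 1)))) ^ 2 := by
    rw [mul_pow, Real.sq_sqrt (div_nonneg (by linarith) (by linarith))]
  have hdist : (m1 - 1) * Real.sqrt (3 * (m1 - 3) / (4 * (3 * m1 - 1))) ≤ -(m3 + (m1 - 3) / 2) := by
    linarith
  rw [sigma2_sub_three_sigma3_eq m1 m3 (by linarith), hroot, ← neg_sq (m3 + _)]
  refine mul_nonneg (by linarith) (sub_nonneg.2 ?_)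
  exact pow_le_pow_left₀ (mul_nonneg (by linarith) (Real.sqrt_nonneg _)) hdist 2

theorem stmt_3 (m1 m2 m3 : ℝ) (hsum : m1 + m2 + m3 = 3) (h12 : m2 ≤ m1) (h23 : m3 ≤ m2)
    (h1 : 3 < m1) (h3 : m3 < 0)
    (hcond : m3 ≤ -((m1 - 3) / 2) - (m1 - 1) * Real.sqrt (3 * (m1 - 3) / (4 * (3 * m1 - 1)))) :
    0 ≤ (m1 * m2 + m2 * m3 + m1 * m3) - 3 * (m1 * m2 * m3) :=
  stmt_3_general m1 m2 m3 hsum h1 hcond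
end

section
/- Let $R$ and $S$ be symmetric operators on $\Lambda^2 V$ for a finite-dimensional real inner product space $V$ (given in components $R_{ijkl}, S_{ijkl}$ with the symmetries of curvature tensors on pairs: $R_{ijkl} = -R_{jikl} = -R_{ijlk} = R_{klij}$). Then the trilinear map $\mathrm{tri}(R_1, R_2, R_3) = \langle R_1 . R_2 + R_2 . R_1 + 2 R_1 \sharp R_2, R_3 \rangle$ is symmetric in all three arguments, where $(R.S)_{ijkl} = \frac{1}{2}\sum_{p,q} R_{ijpq} S_{klpq}$ and $(R \sharp S)_{ijkl} = \frac{1}{2}\sum_{p,q}[R_{ipkq}S_{jplq} + S_{ipkq}R_{jplq} - R_{iplq}S_{jpkq} - S_{iplq}R_{jpkq}]$, and $\langle \cdot, \cdot\rangle$ is the inner product $\langle T, U\rangle = \frac{1}{8}\sum_{i,j,k,l} T_{ijkl} U_{ijkl}$. -/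
open Finset

/-- 4-tensors on `Fin n` with the pair symmetries of curvature tensors. -/
def CurvSym {n : ℕ} (R : Fin n → Fin n → Fin n → Fin n → ℝ) : Prop :=
  (∀ i j k l, R i j k l = -R j i k l) ∧ (∀ i j k l, R i j k l = -R i j l k) ∧
    (∀ i j k l, R i j k l = R k l i j)

/-- The product `R.S`. -/
noncomputable def dotProd {n : ℕ} (R S : Fin n → Fin n → Fin n → Fin n → ℝ) :
    Fin n → Fin n → Fin n → Fin n → ℝ :=
  fun i j k l => (1 / 2 : ℝ) * ∑ p, ∑ q, R i j p q * S k l p q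

/-- The product `R ♯ S`. -/
noncomputable def sharpProd {n : ℕ} (R S : Fin n → Fin n → Fin n → Fin n → ℝ) :
    Fin n → Fin n → Fin n → Fin n → ℝ :=
  fun i j k l => (1 / 2 : ℝ) * ∑ p, ∑ q,
    (R i p k q * S j p l q + S i p k q * R j p l q
      - R i p l q * S j p k q - S i p l q * R j p k q)

/-- Inner product on `S²(Λ²)`. -/
noncomputable def curvInner {n : ℕ} (T U : Fin n → Fin n → Fin n → Fin n → ℝ) : ℝ :=
  (1 / 8 : ℝ) * ∑ i, ∑ j, ∑ k, ∑ l, T i j k l * U i j k l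

/-- The trilinear map `tri`. -/
noncomputable def tri {n : ℕ} (R1 R2 R3 : Fin n → Fin n → Fin n → Fin n → ℝ) : ℝ :=
  curvInner (fun i j k l => dotProd R1 R2 i j k l + dotProd R2 R1 i j k l
    + 2 * sharpProd R1 R2 i j k l) R3

/- ### Auxiliary machinery: sums over six indices -/

noncomputable def S6 {n : ℕ} (f : Fin n → Fin n → Fin n → Fin n → Fin n → Fin n → ℝ) : ℝ :=
  ∑ i, ∑ j, ∑ k, ∑ l, ∑ p, ∑ q, f i j k l p q

lemma S6_congr {n : ℕ} {f g : Fin n → Fin n → Fin n → Fin n → Fin n → Fin n → ℝ}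
    (h : ∀ i j k l p q, f i j k l p q = g i j k l p q) : S6 f = S6 g := by
  unfold S6
  exact Finset.sum_congr rfl fun i _ => Finset.sum_congr rfl fun j _ =>
    Finset.sum_congr rfl fun k _ => Finset.sum_congr rfl fun l _ =>
    Finset.sum_congr rfl fun p _ => Finset.sum_congr rfl fun q _ => h i j k l p q

abbrev T6 (n : ℕ) := Fin n × Fin n × Fin n × Fin n × Fin n × Fin n

lemma S6_eq {n : ℕ} (f : Fin n → Fin n → Fin n → Fin n → Fin n → Fin n → ℝ) :
    S6 f = ∑ x : T6 n, f x.1 x.2.1 x.2.2.1 x.2.2.2.1 x.2.2.2.2.1 x.2.2.2.2.2 := by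
  simp [S6, Fintype.sum_prod_type]

/-- swap pairs (i,j) ↔ (k,l) -/
lemma S6_r1 {n : ℕ} (f : Fin n → Fin n → Fin n → Fin n → Fin n → Fin n → ℝ) :
    S6 (fun i j k l p q => f k l i j p q) = S6 f := by
  rw [S6_eq, S6_eq]
  exact Fintype.sum_equiv
    ⟨fun x => (x.2.2.1, x.2.2.2.1, x.1, x.2.1, x.2.2.2.2.1, x.2.2.2.2.2),
     fun x => (x.2.2.1, x.2.2.2.1, x.1, x.2.1, x.2.2.2.2.1, x.2.2.2.2.2),
     fun x => rfl, fun x => rfl⟩ _ _ (fun x => rfl)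

/-- swap k ↔ l -/
lemma S6_r2 {n : ℕ} (f : Fin n → Fin n → Fin n → Fin n → Fin n → Fin n → ℝ) :
    S6 (fun i j k l p q => f i j l k p q) = S6 f := by
  rw [S6_eq, S6_eq]
  exact Fintype.sum_equiv
    ⟨fun x => (x.1, x.2.1, x.2.2.2.1, x.2.2.1, x.2.2.2.2.1, x.2.2.2.2.2),
     fun x => (x.1, x.2.1, x.2.2.2.1, x.2.2.1, x.2.2.2.2.1, x.2.2.2.2.2),
     fun x => rfl, fun x => rfl⟩ _ _ (fun x => rfl)

/-- swap i ↔ j and k ↔ l -/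
lemma S6_r3 {n : ℕ} (f : Fin n → Fin n → Fin n → Fin n → Fin n → Fin n → ℝ) :
    S6 (fun i j k l p q => f j i l k p q) = S6 f := by
  rw [S6_eq, S6_eq]
  exact Fintype.sum_equiv
    ⟨fun x => (x.2.1, x.1, x.2.2.2.1, x.2.2.1, x.2.2.2.2.1, x.2.2.2.2.2),
     fun x => (x.2.1, x.1, x.2.2.2.1, x.2.2.1, x.2.2.2.2.1, x.2.2.2.2.2),
     fun x => rfl, fun x => rfl⟩ _ _ (fun x => rfl)

/-- swap pairs (k,l) ↔ (p,q) -/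
lemma S6_r4 {n : ℕ} (f : Fin n → Fin n → Fin n → Fin n → Fin n → Fin n → ℝ) :
    S6 (fun i j k l p q => f i j p q k l) = S6 f := by
  rw [S6_eq, S6_eq]
  exact Fintype.sum_equiv
    ⟨fun x => (x.1, x.2.1, x.2.2.2.2.1, x.2.2.2.2.2, x.2.2.1, x.2.2.2.1),
     fun x => (x.1, x.2.1, x.2.2.2.2.1, x.2.2.2.2.2, x.2.2.1, x.2.2.2.1),
     fun x => rfl, fun x => rfl⟩ _ _ (fun x => rfl)

/-- the relabeling (i,j,k,l,p,q) ↦ (p,i,q,k,j,l) -/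
lemma S6_r5 {n : ℕ} (f : Fin n → Fin n → Fin n → Fin n → Fin n → Fin n → ℝ) :
    S6 (fun i j k l p q => f p i q k j l) = S6 f := by
  rw [S6_eq, S6_eq]
  exact Fintype.sum_equiv
    ⟨fun x => (x.2.2.2.2.1, x.1, x.2.2.2.2.2, x.2.2.1, x.2.1, x.2.2.2.1),
     fun x => (x.2.1, x.2.2.2.2.1, x.2.2.2.1, x.2.2.2.2.2, x.1, x.2.2.1),
     fun x => rfl, fun x => rfl⟩ _ _ (fun x => rfl)

lemma S6_smul {n : ℕ} (c : ℝ) (f : Fin n → Fin n → Fin n → Fin n → Fin n → Fin n → ℝ) :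
    S6 (fun i j k l p q => c * f i j k l p q) = c * S6 f := by
  simp only [S6, ← Finset.mul_sum]

lemma S6_neg {n : ℕ} (f : Fin n → Fin n → Fin n → Fin n → Fin n → Fin n → ℝ) :
    S6 (fun i j k l p q => -(f i j k l p q)) = -(S6 f) := by
  simp only [S6, Finset.sum_neg_distrib]

lemma S6_split {n : ℕ} (a b c d e f : Fin n → Fin n → Fin n → Fin n → Fin n → Fin n → ℝ) :
    S6 (fun i j k l p q => a i j k l p q + b i j k l p q + c i j k l p q
        + d i j k l p q - e i j k l p q - f i j k l p q)
      = S6 a + S6 b + S6 c + S6 d - S6 e - S6 f := by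
  simp only [S6, Finset.sum_add_distrib, Finset.sum_sub_distrib]

/- ### The two basic fully symmetric six-index sums -/

noncomputable def Dq {n : ℕ} (A B C : Fin n → Fin n → Fin n → Fin n → ℝ) : ℝ :=
  S6 (fun i j k l p q => A i j p q * B k l p q * C i j k l)

noncomputable def Eq6 {n : ℕ} (A B C : Fin n → Fin n → Fin n → Fin n → ℝ) : ℝ :=
  S6 (fun i j k l p q => A i p k q * B j p l q * C i j k l)

lemma Dq_comm12 {n : ℕ} {A B C : Fin n → Fin n → Fin n → Fin n → ℝ} (hC : CurvSym C) :
    Dq B A C = Dq A B C := by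
  unfold Dq
  rw [← S6_r1 (fun i j k l p q => B i j p q * A k l p q * C i j k l)]
  exact S6_congr fun i j k l p q => by rw [hC.2.2 i j k l]; ring

lemma Dq_comm23 {n : ℕ} {A B C : Fin n → Fin n → Fin n → Fin n → ℝ}
    (hA : CurvSym A) (hB : CurvSym B) (hC : CurvSym C) :
    Dq A C B = Dq A B C := by
  unfold Dq
  rw [← S6_r4 (fun i j k l p q => A i j p q * C k l p q * B i j k l)]
  have step1 : S6 (fun i j k l p q => A i j k l * C p q k l * B i j p q)
      = S6 (fun i j k l p q => A i j k l * B i j p q * C k l p q) :=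
    S6_congr fun i j k l p q => by rw [hC.2.2 p q k l]; ring
  rw [step1, ← S6_r1 (fun i j k l p q => A i j k l * B i j p q * C k l p q)]
  have step2 : S6 (fun i j k l p q => A k l i j * B k l p q * C i j p q)
      = S6 (fun i j k l p q => A i j k l * B k l p q * C i j p q) :=
    S6_congr fun i j k l p q => by rw [← hA.2.2 i j k l]
  rw [step2, ← S6_r4 (fun i j k l p q => A i j k l * B k l p q * C i j p q)]
  exact S6_congr fun i j k l p q => by rw [hB.2.2 p q k l]

lemma Eq6_comm12 {n : ℕ} {A B C : Fin n → Fin n → Fin n → Fin n → ℝ} (hC : CurvSym C) :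
    Eq6 B A C = Eq6 A B C := by
  unfold Eq6
  rw [← S6_r3 (fun i j k l p q => B i p k q * A j p l q * C i j k l)]
  exact S6_congr fun i j k l p q => by
    rw [hC.1 j i l k, hC.2.1 i j l k]; ring

lemma Eq6_comm23 {n : ℕ} {A B C : Fin n → Fin n → Fin n → Fin n → ℝ}
    (hA : CurvSym A) (hB : CurvSym B) (hC : CurvSym C) :
    Eq6 A C B = Eq6 A B C := by
  have key : ∀ (X Z : Fin n → Fin n → Fin n → Fin n → ℝ), CurvSym X → CurvSym Z →
      ∀ Y, Eq6 X Y Z = Eq6 Z X Y := by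
    intro X Z hX hZ Y
    unfold Eq6
    rw [← S6_r5 (fun i j k l p q => X i p k q * Y j p l q * Z i j k l)]
    exact S6_congr fun i j k l p q => by
      rw [hX.1 p j q l, hX.2.1 j p q l, hZ.1 p i q k, hZ.2.1 i p q k]; ring
  rw [key A B hA hB C]
  exact Eq6_comm12 hC

/- ### Expansion of `tri` in terms of `Dq` and `Eq6` -/

lemma core {n : ℕ} (A B C : Fin n → Fin n → Fin n → Fin n → ℝ) (i j k l : Fin n) :
    (dotProd A B i j k l + dotProd B A i j k l + 2 * sharpProd A B i j k l) * C i j k l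
    = ∑ p, ∑ q, ((1/2:ℝ) * (A i j p q * B k l p q * C i j k l)
        + (1/2:ℝ) * (B i j p q * A k l p q * C i j k l)
        + (A i p k q * B j p l q * C i j k l)
        + (B i p k q * A j p l q * C i j k l)
        - (A i p l q * B j p k q * C i j k l)
        - (B i p l q * A j p k q * C i j k l)) := by
  have hs : (2:ℝ) * sharpProd A B i j k l = ∑ p, ∑ q,
      (A i p k q * B j p l q + B i p k q * A j p l q
        - A i p l q * B j p k q - B i p l q * A j p k q) := by
    simp only [sharpProd, ← mul_assoc]
    norm_num
  rw [hs]
  simp only [dotProd, mul_assoc, add_mul, sub_mul, Finset.sum_mul, Finset.mul_sum,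
    Finset.sum_add_distrib, Finset.sum_sub_distrib]
  abel

lemma tri_eq {n : ℕ} (A B C : Fin n → Fin n → Fin n → Fin n → ℝ) (hC : CurvSym C) :
    tri A B C = (1/8 : ℝ) * Dq A B C + (1/2 : ℝ) * Eq6 A B C := by
  have h4 : (∑ i, ∑ j, ∑ k, ∑ l,
        (dotProd A B i j k l + dotProd B A i j k l + 2 * sharpProd A B i j k l) * C i j k l)
      = S6 (fun i j k l p q => (1/2:ℝ) * (A i j p q * B k l p q * C i j k l)
        + (1/2:ℝ) * (B i j p q * A k l p q * C i j k l)
        + (A i p k q * B j p l q * C i j k l)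
        + (B i p k q * A j p l q * C i j k l)
        - (A i p l q * B j p k q * C i j k l)
        - (B i p l q * A j p k q * C i j k l)) := by
    unfold S6
    exact Finset.sum_congr rfl fun i _ => Finset.sum_congr rfl fun j _ =>
      Finset.sum_congr rfl fun k _ => Finset.sum_congr rfl fun l _ => core A B C i j k l
  have hE1 : S6 (fun i j k l p q => A i p l q * B j p k q * C i j k l) = - Eq6 A B C := by
    rw [← S6_r2 (fun i j k l p q => A i p l q * B j p k q * C i j k l)]
    have : S6 (fun i j k l p q => A i p k q * B j p l q * C i j l k)
        = S6 (fun i j k l p q => -(A i p k q * B j p l q * C i j k l)) :=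
      S6_congr fun i j k l p q => by rw [hC.2.1 i j l k]; ring
    rw [this, S6_neg]
    rfl
  have hE2 : S6 (fun i j k l p q => B i p l q * A j p k q * C i j k l) = - Eq6 B A C := by
    rw [← S6_r2 (fun i j k l p q => B i p l q * A j p k q * C i j k l)]
    have : S6 (fun i j k l p q => B i p k q * A j p l q * C i j l k)
        = S6 (fun i j k l p q => -(B i p k q * A j p l q * C i j k l)) :=
      S6_congr fun i j k l p q => by rw [hC.2.1 i j l k]; ring
    rw [this, S6_neg]
    rfl
  have dAB : S6 (fun i j k l p q => A i j p q * B k l p q * C i j k l) = Dq A B C := rfl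
  have dBA : S6 (fun i j k l p q => B i j p q * A k l p q * C i j k l) = Dq B A C := rfl
  have eAB : S6 (fun i j k l p q => A i p k q * B j p l q * C i j k l) = Eq6 A B C := rfl
  have eBA : S6 (fun i j k l p q => B i p k q * A j p l q * C i j k l) = Eq6 B A C := rfl
  simp only [tri, curvInner]
  rw [h4, S6_split, S6_smul, S6_smul, hE1, hE2, dAB, dBA, eAB, eBA,
    Dq_comm12 hC, Eq6_comm12 hC]
  ring

theorem stmt_9 (n : ℕ) (R1 R2 R3 : Fin n → Fin n → Fin n → Fin n → ℝ)
    (h1 : CurvSym R1) (h2 : CurvSym R2) (h3 : CurvSym R3) :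
    tri R1 R2 R3 = tri R2 R1 R3 ∧ tri R1 R2 R3 = tri R1 R3 R2 ∧
      tri R1 R2 R3 = tri R3 R2 R1 := by
  have t123 := tri_eq R1 R2 R3 h3
  have t213 := tri_eq R2 R1 R3 h3
  have t132 := tri_eq R1 R3 R2 h2
  have t321 := tri_eq R3 R2 R1 h1
  have d1 : Dq R2 R1 R3 = Dq R1 R2 R3 := Dq_comm12 h3
  have e1 : Eq6 R2 R1 R3 = Eq6 R1 R2 R3 := Eq6_comm12 h3
  have d2 : Dq R1 R3 R2 = Dq R1 R2 R3 := Dq_comm23 h1 h2 h3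
  have e2 : Eq6 R1 R3 R2 = Eq6 R1 R2 R3 := Eq6_comm23 h1 h2 h3
  have d3 : Dq R3 R2 R1 = Dq R1 R2 R3 := by
    calc Dq R3 R2 R1 = Dq R2 R3 R1 := Dq_comm12 h1
    _ = Dq R2 R1 R3 := Dq_comm23 h2 h1 h3
    _ = Dq R1 R2 R3 := Dq_comm12 h3
  have e3 : Eq6 R3 R2 R1 = Eq6 R1 R2 R3 := by
    calc Eq6 R3 R2 R1 = Eq6 R2 R3 R1 := Eq6_comm12 h1
    _ = Eq6 R2 R1 R3 := Eq6_comm23 h2 h1 h3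
    _ = Eq6 R1 R2 R3 := Eq6_comm12 h3
  refine ⟨?_, ?_, ?_⟩ <;> rw [t123] <;> [rw [t213, d1, e1]; rw [t132, d2, e2]; rw [t321, d3, e3]]
end

section
/- Let $V$ be an $n$-dimensional real inner product space and let $R \in S^2(\Lambda^2 V)$ be an algebraic curvature tensor (satisfying the first Bianchi identity). Then the Ricci contraction of $R^2 + R^\sharp$ satisfies $\mathrm{rc}(R^2 + R^\sharp)(X, Y) = \sum_{p,q} R(X, e_p, Y, e_q)\, \mathrm{rc}(R)(e_p, e_q)$, where $(e_i)$ is an orthonormal basis. In particular, if $\mathrm{rc}(R) = 0$ (i.e. $R$ is a Weyl-type tensor), then $R^2 + R^\sharp$ also has vanishing Ricci contraction. -/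
open Finset

private lemma sum_swap12 {n : ℕ} (f : Fin n → Fin n → Fin n → ℝ) :
    ∑ a, ∑ b, ∑ c, f a b c = ∑ a, ∑ b, ∑ c, f b a c :=
  Finset.sum_comm

private lemma sum_swap23 {n : ℕ} (f : Fin n → Fin n → Fin n → ℝ) :
    ∑ a, ∑ b, ∑ c, f a b c = ∑ a, ∑ b, ∑ c, f a c b :=
  Finset.sum_congr rfl fun _ _ => Finset.sum_comm

private lemma sum_swap13 {n : ℕ} (f : Fin n → Fin n → Fin n → ℝ) :
    ∑ a, ∑ b, ∑ c, f a b c = ∑ a, ∑ b, ∑ c, f c b a := by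
  calc ∑ a, ∑ b, ∑ c, f a b c = ∑ a, ∑ b, ∑ c, f b a c := sum_swap12 f
    _ = ∑ a, ∑ b, ∑ c, f c a b := sum_swap23 (fun a b c => f b a c)
    _ = ∑ a, ∑ b, ∑ c, f c b a := sum_swap12 (fun a b c => f c a b)

theorem stmt_10 (n : ℕ) (R : Fin n → Fin n → Fin n → Fin n → ℝ)
    (hsym : (∀ i j k l, R i j k l = -R j i k l) ∧ (∀ i j k l, R i j k l = -R i j l k) ∧
      (∀ i j k l, R i j k l = R k l i j))
    (hbianchi : ∀ i j k l, R i j k l + R j k i l + R k i j l = 0) :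
    (∀ i j : Fin n,
      (∑ m, ((1 / 2 : ℝ) * ∑ p, ∑ q, R i m p q * R j m p q
        + ∑ p, ∑ q, (R i p j q * R m p m q - R i p m q * R m p j q))) =
      ∑ p, ∑ q, R i p j q * (∑ m, R p m q m)) ∧
    ((∀ p q, (∑ m, R p m q m) = 0) →
      ∀ i j : Fin n,
        (∑ m, ((1 / 2 : ℝ) * ∑ p, ∑ q, R i m p q * R j m p q
          + ∑ p, ∑ q, (R i p j q * R m p m q - R i p m q * R m p j q))) = 0) := by
  obtain ⟨h1, h2, hp⟩ := hsym
  -- Bianchi rearranged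
  have L : ∀ a b c d, R a b c d = R a c b d + R c b a d := by
    intro a b c d
    have hb := hbianchi a b c d
    have e1 := h1 b c a d
    have e2 := h1 c a b d
    linarith
  have main : ∀ i j : Fin n,
      (∑ m, ∑ p, ∑ q, R i p m q * R m p j q)
        = (1/2 : ℝ) * ∑ m, ∑ p, ∑ q, R i m p q * R j m p q := by
    intro i j
    -- key identity: S = 2 Y where Y = ∑ R i p q r * R q p j r,
    -- and T := LHS equals Y after renaming.
    have hS : (∑ a, ∑ b, ∑ c, R i a b c * R j a b c)
        = (∑ a, ∑ b, ∑ c, R i a b c * R j b a c)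
          + ∑ a, ∑ b, ∑ c, R i a b c * R b a j c := by
      rw [← Finset.sum_add_distrib]
      refine Finset.sum_congr rfl fun a _ => ?_
      rw [← Finset.sum_add_distrib]
      refine Finset.sum_congr rfl fun b _ => ?_
      rw [← Finset.sum_add_distrib]
      refine Finset.sum_congr rfl fun c _ => ?_
      rw [L j a b c]; ring
    have hX : (∑ a, ∑ b, ∑ c, R i a b c * R j b a c)
        = (∑ a, ∑ b, ∑ c, R i a b c * R j a b c)
          + ∑ a, ∑ b, ∑ c, R b a i c * R j b a c := by
      have step : (∑ a, ∑ b, ∑ c, R i a b c * R j b a c)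
          = (∑ a, ∑ b, ∑ c, R i b a c * R j b a c)
            + ∑ a, ∑ b, ∑ c, R b a i c * R j b a c := by
        rw [← Finset.sum_add_distrib]
        refine Finset.sum_congr rfl fun a _ => ?_
        rw [← Finset.sum_add_distrib]
        refine Finset.sum_congr rfl fun b _ => ?_
        rw [← Finset.sum_add_distrib]
        refine Finset.sum_congr rfl fun c _ => ?_
        rw [L i a b c]; ring
      rw [step, sum_swap12 (fun a b c => R i b a c * R j b a c)]
    have hY : (∑ a, ∑ b, ∑ c, R i a b c * R b a j c)
        = (∑ a, ∑ b, ∑ c, R b a i c * R j b a c)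
          + ∑ a, ∑ b, ∑ c, R i a b c * R j a b c := by
      have r1 : (∑ a, ∑ b, ∑ c, R i a b c * R b a j c)
          = ∑ a, ∑ b, ∑ c, R b a i c * R j a b c := by
        calc (∑ a, ∑ b, ∑ c, R i a b c * R b a j c)
            = ∑ a, ∑ b, ∑ c, R i c b a * R b c j a := by
              exact sum_swap13 (fun a b c => R i a b c * R b a j c)
          _ = ∑ a, ∑ b, ∑ c, R b a i c * R j a b c := by
              refine Finset.sum_congr rfl fun a _ => ?_
              refine Finset.sum_congr rfl fun b _ => ?_
              refine Finset.sum_congr rfl fun c _ => ?_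
              rw [hp i c b a, hp b c j a]
      rw [r1]
      have step : (∑ a, ∑ b, ∑ c, R b a i c * R j a b c)
          = (∑ a, ∑ b, ∑ c, R b a i c * R j b a c)
            + ∑ a, ∑ b, ∑ c, R b a i c * R b a j c := by
        rw [← Finset.sum_add_distrib]
        refine Finset.sum_congr rfl fun a _ => ?_
        rw [← Finset.sum_add_distrib]
        refine Finset.sum_congr rfl fun b _ => ?_
        rw [← Finset.sum_add_distrib]
        refine Finset.sum_congr rfl fun c _ => ?_
        rw [L j a b c]; ring
      rw [step]
      congr 1
      calc (∑ a, ∑ b, ∑ c, R b a i c * R b a j c)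
          = ∑ a, ∑ b, ∑ c, R i c b a * R j c b a := by
            refine Finset.sum_congr rfl fun a _ => ?_
            refine Finset.sum_congr rfl fun b _ => ?_
            refine Finset.sum_congr rfl fun c _ => ?_
            rw [hp b a i c, hp b a j c]
        _ = ∑ a, ∑ b, ∑ c, R i a b c * R j a b c :=
            (sum_swap13 (fun a b c => R i a b c * R j a b c)).symm
    -- T = Y
    have hT : (∑ m, ∑ p, ∑ q, R i p m q * R m p j q)
        = ∑ a, ∑ b, ∑ c, R i a b c * R b a j c := by
      calc (∑ m, ∑ p, ∑ q, R i p m q * R m p j q)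
          = ∑ m, ∑ p, ∑ q, R i m p q * R p m j q :=
            sum_swap12 (fun m p q => R i p m q * R m p j q)
        _ = ∑ a, ∑ b, ∑ c, R i a b c * R b a j c := rfl
    -- combine: from hS, hX : Z = -Y ; with hY : Y = -Y + S, so Y = S/2
    set S := ∑ a, ∑ b, ∑ c, R i a b c * R j a b c with hSdef
    set X := ∑ a, ∑ b, ∑ c, R i a b c * R j b a c with hXdef
    set Y := ∑ a, ∑ b, ∑ c, R i a b c * R b a j c with hYdef
    set Z := ∑ a, ∑ b, ∑ c, R b a i c * R j b a c with hZdef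
    rw [hT]
    have : Y = (1/2 : ℝ) * S := by linarith
    linarith
  have part1 : ∀ i j : Fin n,
      (∑ m, ((1 / 2 : ℝ) * ∑ p, ∑ q, R i m p q * R j m p q
        + ∑ p, ∑ q, (R i p j q * R m p m q - R i p m q * R m p j q))) =
      ∑ p, ∑ q, R i p j q * (∑ m, R p m q m) := by
    intro i j
    have split : (∑ m, ((1 / 2 : ℝ) * ∑ p, ∑ q, R i m p q * R j m p q
        + ∑ p, ∑ q, (R i p j q * R m p m q - R i p m q * R m p j q)))
        = (∑ m, (1 / 2 : ℝ) * ∑ p, ∑ q, R i m p q * R j m p q)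
          + ((∑ m, ∑ p, ∑ q, R i p j q * R m p m q)
            - ∑ m, ∑ p, ∑ q, R i p m q * R m p j q) := by
      rw [Finset.sum_add_distrib]
      congr 1
      rw [← Finset.sum_sub_distrib]
      refine Finset.sum_congr rfl fun m _ => ?_
      rw [← Finset.sum_sub_distrib]
      refine Finset.sum_congr rfl fun p _ => ?_
      rw [← Finset.sum_sub_distrib]
    rw [split, main i j]
    have h2' : (∑ m, (1 / 2 : ℝ) * ∑ p, ∑ q, R i m p q * R j m p q)
        = (1/2 : ℝ) * ∑ m, ∑ p, ∑ q, R i m p q * R j m p q := by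
      rw [Finset.mul_sum]
    rw [h2']
    have hric : (∑ m, ∑ p, ∑ q, R i p j q * R m p m q)
        = ∑ p, ∑ q, R i p j q * (∑ m, R p m q m) := by
      rw [Finset.sum_comm]
      refine Finset.sum_congr rfl fun p _ => ?_
      rw [Finset.sum_comm]
      refine Finset.sum_congr rfl fun q _ => ?_
      rw [Finset.mul_sum]
      refine Finset.sum_congr rfl fun m _ => ?_
      congr 1
      rw [h1 p m q m, h2 m p q m]; ring
    rw [hric]
    ring
  refine ⟨part1, fun hric0 i j => ?_⟩
  rw [part1 i j]
  simp [hric0]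
end

section
/- Let $V$ be an $n$-dimensional real inner product space, let $A$ be a symmetric bilinear form on $V$, let $B = A \circ g$ be its Kulkarni–Nomizu product with the metric, and let $W$ be an algebraic Weyl tensor (algebraic curvature tensor with vanishing Ricci contraction). Then $\langle B, W^2 + W^\sharp \rangle = 0$, where $\langle T, U \rangle = \frac{1}{8}\sum_{i,j,k,l} T_{ijkl}U_{ijkl}$. -/
/-!
Pairing with a Kulkarni–Nomizu product `A ∘ g` only sees Ricci contractions: if `V` is
antisymmetric in each pair of slots, then `∑ (A ∘ g)_{ijkl} V_{ijkl} = 4 ∑ A_{ik} rc(V)_{ik}`.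
For an algebraic curvature tensor `W`, the first Bianchi identity gives
`2 ∑ W_{ipjq} W_{jpkq} = ∑ W_{ijpq} W_{kjpq}` (summing over repeated indices), which reduces
`rc(W² + W♯)_{ik}` to `∑ W_{ipkq} rc(W)_{pq}`; this vanishes for a Weyl tensor.
-/

open Finset

variable {ι R : Type*} [CommRing R]

structure IsAntisymmPairs (V : ι → ι → ι → ι → R) : Prop where
  antisymm_fst : ∀ i j k l, V i j k l = -V j i k l
  antisymm_snd : ∀ i j k l, V i j k l = -V i j l k

structure IsAlgCurvatureTensor (W : ι → ι → ι → ι → R) : Prop extends IsAntisymmPairs W where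
  symm_pairs : ∀ i j k l, W i j k l = W k l i j
  bianchi : ∀ i j k l, W i j k l + W j k i l + W k i j l = 0

theorem IsAntisymmPairs.add {V V' : ι → ι → ι → ι → R} (hV : IsAntisymmPairs V)
    (hV' : IsAntisymmPairs V') : IsAntisymmPairs (V + V') where
  antisymm_fst i j k l := by
    simp only [Pi.add_apply, hV.antisymm_fst i j k l, hV'.antisymm_fst i j k l, neg_add]
  antisymm_snd i j k l := by
    simp only [Pi.add_apply, hV.antisymm_snd i j k l, hV'.antisymm_snd i j k l, neg_add]

variable [Fintype ι]

def ricciContraction (V : ι → ι → ι → ι → R) (i k : ι) : R := ∑ j, V i j k j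

def kulkarniNomizu (h g : Matrix ι ι R) (i j k l : ι) : R :=
  h i k * g j l + h j l * g i k - h i l * g j k - h j k * g i l

theorem IsAntisymmPairs.sum_apply_self_left {V : ι → ι → ι → ι → R} (hV : IsAntisymmPairs V)
    (j l : ι) : ∑ i, V i j i l = ricciContraction V j l :=
  sum_congr rfl fun i _ => by rw [hV.antisymm_fst, hV.antisymm_snd, neg_neg]

theorem IsAntisymmPairs.sum_kulkarniNomizu_mul {V : ι → ι → ι → ι → R}
    (hV : IsAntisymmPairs V) (h g : Matrix ι ι R) :
    ∑ i, ∑ j, ∑ k, ∑ l, kulkarniNomizu h g i j k l * V i j k l =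
      4 * ∑ i, ∑ j, ∑ k, ∑ l, h i k * g j l * V i j k l := by
  have swap_both : ∑ i, ∑ j, ∑ k, ∑ l, h j l * g i k * V i j k l =
      ∑ i, ∑ j, ∑ k, ∑ l, h i k * g j l * V i j k l := by
    rw [sum_comm]
    refine sum_congr rfl fun i _ => sum_congr rfl fun j _ => ?_
    rw [sum_comm]
    refine sum_congr rfl fun k _ => sum_congr rfl fun l _ => ?_
    rw [hV.antisymm_fst, hV.antisymm_snd]; ring
  have swap_snd : ∑ i, ∑ j, ∑ k, ∑ l, h i l * g j k * V i j k l =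
      -∑ i, ∑ j, ∑ k, ∑ l, h i k * g j l * V i j k l := by
    simp only [← sum_neg_distrib]
    refine sum_congr rfl fun i _ => sum_congr rfl fun j _ => ?_
    rw [sum_comm]
    refine sum_congr rfl fun k _ => sum_congr rfl fun l _ => ?_
    rw [hV.antisymm_snd]; ring
  have swap_fst : ∑ i, ∑ j, ∑ k, ∑ l, h j k * g i l * V i j k l =
      -∑ i, ∑ j, ∑ k, ∑ l, h i k * g j l * V i j k l := by
    rw [sum_comm, ← sum_neg_distrib]
    refine sum_congr rfl fun i _ => ?_
    simp only [← sum_neg_distrib]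
    refine sum_congr rfl fun j _ => sum_congr rfl fun k _ => sum_congr rfl fun l _ => ?_
    rw [hV.antisymm_fst]; ring
  simp only [kulkarniNomizu, add_mul, sub_mul, sum_add_distrib, sum_sub_distrib]
  rw [swap_both, swap_snd, swap_fst]
  ring

theorem sum_mul_one_mul [DecidableEq ι] (h : Matrix ι ι R) (V : ι → ι → ι → ι → R) :
    ∑ i, ∑ j, ∑ k, ∑ l, h i k * (1 : Matrix ι ι R) j l * V i j k l =
      ∑ i, ∑ k, h i k * ricciContraction V i k := by
  refine sum_congr rfl fun i _ => ?_
  rw [sum_comm]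
  refine sum_congr rfl fun k _ => ?_
  simp [ricciContraction, Matrix.one_apply, mul_sum]

theorem IsAlgCurvatureTensor.two_mul_sum_mul {W : ι → ι → ι → ι → R}
    (hW : IsAlgCurvatureTensor W) (i k : ι) :
    2 * ∑ j, ∑ p, ∑ q, W i p j q * W j p k q = ∑ j, ∑ p, ∑ q, W i j p q * W k j p q := by
  have swap : ∑ j, ∑ p, ∑ q, W i p j q * W j p k q =
      -∑ j, ∑ p, ∑ q, W i j p q * W j p k q := by
    rw [sum_comm]
    simp only [← sum_neg_distrib]
    refine sum_congr rfl fun j _ => sum_congr rfl fun p _ => sum_congr rfl fun q _ => ?_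
    rw [hW.antisymm_fst p j k q]; ring
  have cycle : ∑ j, ∑ p, ∑ q, W i j p q * W p k j q =
      ∑ j, ∑ p, ∑ q, W i j p q * W j p k q := by
    refine sum_congr rfl fun j _ => ?_
    rw [sum_comm]
    refine sum_congr rfl fun p _ => sum_congr rfl fun q _ => ?_
    rw [hW.antisymm_snd i j q p, hW.symm_pairs q k j p, hW.antisymm_snd j p q k]; ring
  have bianchi : ∑ j, ∑ p, ∑ q, W i j p q * W j p k q + ∑ j, ∑ p, ∑ q, W i j p q * W p k j q =
      -∑ j, ∑ p, ∑ q, W i j p q * W k j p q := by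
    simp only [← sum_add_distrib, ← sum_neg_distrib]
    refine sum_congr rfl fun j _ => sum_congr rfl fun p _ => sum_congr rfl fun q _ => ?_
    linear_combination W i j p q * hW.bianchi j p k q
  linear_combination 2 * swap - bianchi + cycle

variable {K : Type*} [Field K]

def curvatureSq (W : ι → ι → ι → ι → K) (i j k l : ι) : K :=
  1 / 2 * ∑ p, ∑ q, W i j p q * W k l p q

def curvatureSharp (W : ι → ι → ι → ι → K) (i j k l : ι) : K :=
  ∑ p, ∑ q, (W i p k q * W j p l q - W i p l q * W j p k q)

theorem isAntisymmPairs_curvatureSq {W : ι → ι → ι → ι → K}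
    (hW : ∀ i j k l, W i j k l = -W j i k l) : IsAntisymmPairs (curvatureSq W) where
  antisymm_fst i j k l := by
    simp only [curvatureSq, hW i j, neg_mul, sum_neg_distrib, mul_neg]
  antisymm_snd i j k l := by
    simp only [curvatureSq, hW k l, mul_neg, sum_neg_distrib]

theorem isAntisymmPairs_curvatureSharp (W : ι → ι → ι → ι → K) :
    IsAntisymmPairs (curvatureSharp W) where
  antisymm_fst i j k l := by
    simp only [curvatureSharp, ← sum_neg_distrib, neg_sub, mul_comm (W i _ _ _)]
  antisymm_snd i j k l := by
    simp only [curvatureSharp, ← sum_neg_distrib, neg_sub]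

theorem IsAlgCurvatureTensor.ricciContraction_curvatureSq_add_curvatureSharp [CharZero K]
    {W : ι → ι → ι → ι → K} (hW : IsAlgCurvatureTensor W) (i k : ι) :
    ricciContraction (curvatureSq W + curvatureSharp W) i k =
      ∑ p, ∑ q, W i p k q * ricciContraction W p q := by
  have expand : ricciContraction (curvatureSq W + curvatureSharp W) i k =
      1 / 2 * ∑ j, ∑ p, ∑ q, W i j p q * W k j p q
        + ∑ p, ∑ q, W i p k q * ∑ j, W j p j q - ∑ j, ∑ p, ∑ q, W i p j q * W j p k q := by
    simp only [ricciContraction, Pi.add_apply, curvatureSq, curvatureSharp, sum_add_distrib,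
      sum_sub_distrib, mul_sum]
    rw [add_sub_assoc]
    congr 2
    exact sum_comm.trans (sum_congr rfl fun p _ => sum_comm)
  simp only [expand, hW.sum_apply_self_left]
  linear_combination (-1 / 2 : K) * hW.two_mul_sum_mul i k

theorem stmt_11_general (n : ℕ) (A : Matrix (Fin n) (Fin n) ℝ)
    (W : Fin n → Fin n → Fin n → Fin n → ℝ)
    (hsym : (∀ i j k l, W i j k l = -W j i k l) ∧ (∀ i j k l, W i j k l = -W i j l k) ∧
      (∀ i j k l, W i j k l = W k l i j))
    (hbianchi : ∀ i j k l, W i j k l + W j k i l + W k i j l = 0)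
    (hrc : ∀ i j, (∑ m, W i m j m) = 0) :
    -- B = A ∘ g, paired with W² + W♯
    (1 / 8 : ℝ) * ∑ i, ∑ j, ∑ k, ∑ l,
      (A i k * (if j = l then (1 : ℝ) else 0) + A j l * (if i = k then (1 : ℝ) else 0)
        - A i l * (if j = k then (1 : ℝ) else 0) - A j k * (if i = l then (1 : ℝ) else 0)) *
      ((1 / 2 : ℝ) * (∑ p, ∑ q, W i j p q * W k l p q)
        + ∑ p, ∑ q, (W i p k q * W j p l q - W i p l q * W j p k q)) = 0 := by
  have hW : IsAlgCurvatureTensor W := ⟨⟨hsym.1, hsym.2.1⟩, hsym.2.2, hbianchi⟩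
  have hV := (isAntisymmPairs_curvatureSq hW.antisymm_fst).add (isAntisymmPairs_curvatureSharp W)
  have hweyl : ∀ p q, ricciContraction W p q = 0 := hrc
  change (1 / 8 : ℝ) * ∑ i, ∑ j, ∑ k, ∑ l,
    kulkarniNomizu A 1 i j k l * (curvatureSq W + curvatureSharp W) i j k l = 0
  rw [hV.sum_kulkarniNomizu_mul, sum_mul_one_mul]
  simp [hW.ricciContraction_curvatureSq_add_curvatureSharp, hweyl]

theorem stmt_11 (n : ℕ) (A : Matrix (Fin n) (Fin n) ℝ) (hA : A.IsSymm)
    (W : Fin n → Fin n → Fin n → Fin n → ℝ)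
    (hsym : (∀ i j k l, W i j k l = -W j i k l) ∧ (∀ i j k l, W i j k l = -W i j l k) ∧
      (∀ i j k l, W i j k l = W k l i j))
    (hbianchi : ∀ i j k l, W i j k l + W j k i l + W k i j l = 0)
    (hrc : ∀ i j, (∑ m, W i m j m) = 0) :
    -- B = A ∘ g, paired with W² + W♯
    (1 / 8 : ℝ) * ∑ i, ∑ j, ∑ k, ∑ l,
      (A i k * (if j = l then (1 : ℝ) else 0) + A j l * (if i = k then (1 : ℝ) else 0)
        - A i l * (if j = k then (1 : ℝ) else 0) - A j k * (if i = l then (1 : ℝ) else 0)) *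
      ((1 / 2 : ℝ) * (∑ p, ∑ q, W i j p q * W k l p q)
        + ∑ p, ∑ q, (W i p k q * W j p l q - W i p l q * W j p k q)) = 0 :=
  stmt_11_general n A W hsym hbianchi hrc
end

section
/- Let $W$ be a 4-tensor on $\mathbb{R}^n$ ($n \ge 4$) with curvature symmetries $W_{ijkl} = -W_{jikl} = -W_{ijlk} = W_{klij}$ satisfying the first Bianchi identity, viewed as a symmetric operator on $\Lambda^2 \mathbb{R}^n$. If every eigenvalue of $W$ has absolute value at most $\omega$, then $|W_{ijkl}| \le \frac{4}{3}\omega$ for all indices $i,j,k,l$. -/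
/-!
Let `T φ = ½ ∑ W_{ijkl} φ_{kl}` act on 2-forms. It is symmetric, so diagonalising it gives
`|⟪T φ, φ⟫| ≤ ω ‖φ‖²`. For `φ = u ∧ v` one has `⟪T φ, φ⟫ = 2 W(u,v,u,v)` and
`‖u ∧ v‖² = 2 (‖u‖²‖v‖² - ⟪u,v⟫²)`, hence `|W(u,v,u,v)| ≤ ω ‖u‖²‖v‖²`; orthonormal `u, v`
show `ω ≥ 0`.

Polarising with `u = e_a ± e_c`, `v = e_b ± e_d` gives `|W_{abcd} + W_{adcb}| ≤ 2ω`, the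
parallelogram law making the four weights `‖u‖²‖v‖²` add up to `16`. Finally the Bianchi identity
`W_{ijkl} + W_{iklj} + W_{iljk} = 0` yields
`3 W_{ijkl} = (W_{ijkl} + W_{ilkj}) - (W_{ijlk} + W_{iklj})`, and each bracket has absolute value at most `2ω`.
-/

open scoped RealInnerProductSpace
open EuclideanSpace

theorem LinearMap.IsSymmetric.abs_inner_map_self_le {E : Type*} [NormedAddCommGroup E]
    [InnerProductSpace ℝ E] [FiniteDimensional ℝ E] {T : E →ₗ[ℝ] E} (hT : T.IsSymmetric)
    {ω : ℝ} (hω : ∀ (μ : ℝ) (x : E), x ≠ 0 → T x = μ • x → |μ| ≤ ω) (x : E) :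
    |⟪T x, x⟫| ≤ ω * ‖x‖ ^ 2 := by
  set b := hT.eigenvectorBasis rfl
  set c := b.repr x
  have hμ (i) : |hT.eigenvalues rfl i| ≤ ω :=
    hω _ _ (b.orthonormal.ne_zero i) (hT.apply_eigenvectorBasis rfl i)
  have hinner : ⟪T x, x⟫ = ∑ i, hT.eigenvalues rfl i * c i ^ 2 := by
    rw [← b.repr.inner_map_map, PiLp.inner_apply]
    refine Finset.sum_congr rfl fun i _ => ?_
    rw [hT.eigenvectorBasis_apply_self_apply]
    simp only [RCLike.inner_apply, Real.ringHom_apply, sq, c]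
    ring
  have hnorm : ‖x‖ ^ 2 = ∑ i, c i ^ 2 := by
    rw [← b.repr.norm_map, EuclideanSpace.norm_sq_eq]
    simp [c]
  rw [hinner, hnorm, Finset.mul_sum]
  refine (Finset.abs_sum_le_sum_abs _ _).trans (Finset.sum_le_sum fun i _ => ?_)
  rw [abs_mul, abs_sq]
  exact mul_le_mul_of_nonneg_right (hμ i) (sq_nonneg _)

section Curvature

variable {n : ℕ}

/-- 2-forms are encoded as antisymmetric vectors of `ℝ^{n×n}`; the factor `½` makes this the
operator `e_i ∧ e_j ↦ ∑_{k<l} W_{ijkl} e_k ∧ e_l`. -/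
noncomputable def curvatureOperator (W : Fin n → Fin n → Fin n → Fin n → ℝ) :
    EuclideanSpace ℝ (Fin n × Fin n) →ₗ[ℝ] EuclideanSpace ℝ (Fin n × Fin n) :=
  Matrix.toEuclideanLin (Matrix.of fun p q => W p.1 p.2 q.1 q.2 / 2)

def twoForms (n : ℕ) : Submodule ℝ (EuclideanSpace ℝ (Fin n × Fin n)) where
  carrier := {φ | ∀ i j, φ (j, i) = -φ (i, j)}
  add_mem' {φ ψ} hφ hψ i j := by
    simp only [PiLp.add_apply, hφ i j, hψ i j]
    ring
  zero_mem' i j := by simp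
  smul_mem' c φ hφ i j := by simp [hφ i j]

def wedge (u v : EuclideanSpace ℝ (Fin n)) : EuclideanSpace ℝ (Fin n × Fin n) :=
  WithLp.toLp 2 fun p => u p.1 * v p.2 - u p.2 * v p.1

def sectionalForm (W : Fin n → Fin n → Fin n → Fin n → ℝ) (u v : EuclideanSpace ℝ (Fin n)) : ℝ :=
  ∑ i, u i * ∑ j, v j * ∑ k, u k * ∑ l, v l * W i j k l

variable {W : Fin n → Fin n → Fin n → Fin n → ℝ}

lemma curvatureOperator_apply (φ : EuclideanSpace ℝ (Fin n × Fin n)) (i j : Fin n) :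
    curvatureOperator W φ (i, j) = 1 / 2 * ∑ k, ∑ l, W i j k l * φ (k, l) := by
  simp only [curvatureOperator, Matrix.toLpLin_apply, Matrix.mulVec, dotProduct,
    Matrix.of_apply, Fintype.sum_prod_type, Finset.mul_sum]
  ring_nf

lemma curvatureOperator_isSymmetric (h3 : ∀ i j k l, W i j k l = W k l i j) :
    (curvatureOperator W).IsSymmetric := by
  rw [curvatureOperator, Matrix.isSymmetric_toEuclideanLin_iff]
  ext p q
  simp [h3 q.1]

lemma curvatureOperator_mem_twoForms (h1 : ∀ i j k l, W i j k l = -W j i k l)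
    (φ : EuclideanSpace ℝ (Fin n × Fin n)) : curvatureOperator W φ ∈ twoForms n := by
  intro i j
  simp only [curvatureOperator_apply, h1 j i, neg_mul, Finset.sum_neg_distrib, mul_neg]

lemma abs_inner_curvatureOperator_le (h1 : ∀ i j k l, W i j k l = -W j i k l)
    (h3 : ∀ i j k l, W i j k l = W k l i j) {ω : ℝ}
    (hω : ∀ (μ : ℝ) φ, φ ∈ twoForms n → φ ≠ 0 → curvatureOperator W φ = μ • φ → |μ| ≤ ω)
    {φ : EuclideanSpace ℝ (Fin n × Fin n)} (hφ : φ ∈ twoForms n) :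
    |⟪curvatureOperator W φ, φ⟫| ≤ ω * ‖φ‖ ^ 2 := by
  have hV (ψ) (_ : ψ ∈ twoForms n) := curvatureOperator_mem_twoForms h1 ψ
  have := ((curvatureOperator_isSymmetric h3).restrict_invariant hV).abs_inner_map_self_le
    (ω := ω) ?_ ⟨φ, hφ⟩
  · simpa using this
  · intro μ ψ hψ hTψ
    exact hω μ ψ ψ.2 (by simpa using hψ) (by simpa [Subtype.ext_iff] using hTψ)

lemma wedge_mem_twoForms (u v : EuclideanSpace ℝ (Fin n)) : wedge u v ∈ twoForms n := by
  intro i j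
  simp only [wedge]
  ring

lemma norm_wedge_sq (u v : EuclideanSpace ℝ (Fin n)) :
    ‖wedge u v‖ ^ 2 = 2 * (‖u‖ ^ 2 * ‖v‖ ^ 2 - ⟪u, v⟫ ^ 2) := by
  set g : Fin n → Fin n → ℝ := fun i j => u i ^ 2 * v j ^ 2 - u i * v i * (u j * v j)
  have hsymm : ∑ i, ∑ j, g j i = ∑ i, ∑ j, g i j := Finset.sum_comm
  calc ‖wedge u v‖ ^ 2 = ∑ i, ∑ j, (g i j + g j i) := by
        simp only [EuclideanSpace.norm_sq_eq, Real.norm_eq_abs, sq_abs, Fintype.sum_prod_type]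
        refine Finset.sum_congr rfl fun i _ => Finset.sum_congr rfl fun j _ => ?_
        simp only [wedge, g]
        ring
    _ = 2 * ∑ i, ∑ j, g i j := by
        simp only [Finset.sum_add_distrib, hsymm]
        ring
    _ = _ := by
        rw [EuclideanSpace.norm_sq_eq, EuclideanSpace.norm_sq_eq, real_inner_comm]
        simp only [g, Finset.sum_sub_distrib, ← Finset.sum_mul_sum, Real.norm_eq_abs,
          abs_mul_abs_self, PiLp.inner_apply, RCLike.inner_apply, conj_trivial, sq]

lemma sum_sum_wedge_mul {A : Fin n → Fin n → ℝ} (hA : ∀ i j, A j i = -A i j)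
    (u v : EuclideanSpace ℝ (Fin n)) :
    ∑ i, ∑ j, wedge u v (i, j) * A i j = 2 * ∑ i, u i * ∑ j, v j * A i j := by
  simp only [wedge, sub_mul, Finset.sum_sub_distrib]
  rw [Finset.sum_comm (f := fun i j : Fin n => (u j * v i * A i j : ℝ)), ← Finset.sum_sub_distrib,
    Finset.mul_sum]
  refine Finset.sum_congr rfl fun i _ => ?_
  rw [← Finset.sum_sub_distrib, Finset.mul_sum, Finset.mul_sum]
  refine Finset.sum_congr rfl fun j _ => ?_
  rw [hA]
  ring

lemma inner_curvatureOperator_wedge (h1 : ∀ i j k l, W i j k l = -W j i k l)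
    (h2 : ∀ i j k l, W i j k l = -W i j l k) (u v : EuclideanSpace ℝ (Fin n)) :
    ⟪curvatureOperator W (wedge u v), wedge u v⟫ = 2 * sectionalForm W u v := by
  have hinner (i j) : ∑ k, ∑ l, W i j k l * wedge u v (k, l)
      = 2 * ∑ k, u k * ∑ l, v l * W i j k l := by
    simp only [mul_comm (W i j _ _)]
    exact sum_sum_wedge_mul (fun k l => h2 i j l k) u v
  simp only [PiLp.inner_apply, RCLike.inner_apply, conj_trivial, Fintype.sum_prod_type,
    curvatureOperator_apply, hinner, one_div, inv_mul_cancel_left₀ (two_ne_zero' ℝ)]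
  rw [sectionalForm, sum_sum_wedge_mul]
  intro i j
  simp only [h1 j i, mul_neg, Finset.sum_neg_distrib]

lemma abs_sectionalForm_le (h1 : ∀ i j k l, W i j k l = -W j i k l)
    (h2 : ∀ i j k l, W i j k l = -W i j l k) {ω : ℝ}
    (hω : ∀ φ ∈ twoForms n, |⟪curvatureOperator W φ, φ⟫| ≤ ω * ‖φ‖ ^ 2)
    (u v : EuclideanSpace ℝ (Fin n)) :
    |sectionalForm W u v| ≤ ω * (‖u‖ ^ 2 * ‖v‖ ^ 2 - ⟪u, v⟫ ^ 2) := by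
  have := hω _ (wedge_mem_twoForms u v)
  rw [inner_curvatureOperator_wedge h1 h2, norm_wedge_sq, abs_mul, abs_two] at this
  linarith

lemma sectionalForm_polarization (h3 : ∀ i j k l, W i j k l = W k l i j) (a b c d : Fin n) :
    sectionalForm W (single a 1 + single c 1) (single b 1 + single d 1)
      - sectionalForm W (single a 1 - single c 1) (single b 1 + single d 1)
      - sectionalForm W (single a 1 + single c 1) (single b 1 - single d 1)
      + sectionalForm W (single a 1 - single c 1) (single b 1 - single d 1)
      = 8 * (W a b c d + W a d c b) := by
  simp only [sectionalForm, PiLp.add_apply, PiLp.sub_apply, PiLp.single_apply, add_mul, sub_mul,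
    ite_mul, one_mul, zero_mul, Finset.sum_add_distrib, Finset.sum_sub_distrib,
    Finset.sum_ite_eq', Finset.mem_univ, if_true]
  linear_combination 4 * h3 c b a d + 4 * h3 c d a b

lemma abs_add_le_of_abs_sectionalForm_le (h3 : ∀ i j k l, W i j k l = W k l i j) {ω : ℝ}
    (hω : ∀ u v, |sectionalForm W u v| ≤ ω * (‖u‖ ^ 2 * ‖v‖ ^ 2)) (a b c d : Fin n) :
    |W a b c d + W a d c b| ≤ 2 * ω := by
  have hpar (i j : Fin n) :
      ‖single i (1 : ℝ) + single j 1‖ ^ 2 + ‖single i (1 : ℝ) - single j 1‖ ^ 2 = 4 := by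
    have := parallelogram_law_with_norm ℝ (single i (1 : ℝ)) (single j 1)
    simp only [PiLp.norm_single, norm_one] at this
    linarith
  have key : |8 * (W a b c d + W a d c b)| ≤ 16 * ω := by
    rw [← sectionalForm_polarization h3]
    calc _ ≤ ω * (‖single a (1 : ℝ) + single c 1‖ ^ 2 * ‖single b (1 : ℝ) + single d 1‖ ^ 2)
          + ω * (‖single a (1 : ℝ) - single c 1‖ ^ 2 * ‖single b (1 : ℝ) + single d 1‖ ^ 2)
          + ω * (‖single a (1 : ℝ) + single c 1‖ ^ 2 * ‖single b (1 : ℝ) - single d 1‖ ^ 2)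
          + ω * (‖single a (1 : ℝ) - single c 1‖ ^ 2 * ‖single b (1 : ℝ) - single d 1‖ ^ 2) :=
        (abs_add_le _ _).trans <| add_le_add ((abs_sub _ _).trans <| add_le_add
          ((abs_sub _ _).trans <| add_le_add (hω _ _) (hω _ _)) (hω _ _)) (hω _ _)
      _ = ω * ((‖single a (1 : ℝ) + single c 1‖ ^ 2 + ‖single a (1 : ℝ) - single c 1‖ ^ 2)
          * (‖single b (1 : ℝ) + single d 1‖ ^ 2 + ‖single b (1 : ℝ) - single d 1‖ ^ 2)) := by
        ring
      _ = 16 * ω := by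
        rw [hpar, hpar]
        ring
  rw [abs_mul] at key
  norm_num at key
  linarith

lemma abs_le_of_bianchi (h2 : ∀ i j k l, W i j k l = -W i j l k)
    (h3 : ∀ i j k l, W i j k l = W k l i j)
    (hbianchi : ∀ i j k l, W i j k l + W j k i l + W k i j l = 0) {ω : ℝ}
    (hω : ∀ a b c d, |W a b c d + W a d c b| ≤ 2 * ω) (i j k l : Fin n) :
    |W i j k l| ≤ 4 / 3 * ω := by
  have hb : W i j k l + W i k l j + W i l j k = 0 := by
    linarith [hbianchi k l j i, h3 i j k l, h3 i k l j, h3 i l j k, h2 k l i j, h2 l j i k,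
      h2 j k i l]
  have h₁ := abs_le.mp (hω i j k l)
  have h₂ := abs_le.mp (hω i j l k)
  rw [abs_le]
  constructor <;> linarith [h2 i j k l, h2 i l k j]

end Curvature

theorem stmt_13 (n : ℕ) (hn : 4 ≤ n) (ω : ℝ)
    (W : Fin n → Fin n → Fin n → Fin n → ℝ)
    (hsym : (∀ i j k l, W i j k l = -W j i k l) ∧ (∀ i j k l, W i j k l = -W i j l k) ∧
      (∀ i j k l, W i j k l = W k l i j))
    (hbianchi : ∀ i j k l, W i j k l + W j k i l + W k i j l = 0)
    -- every eigenvalue of W, as an operator on 2-forms, has absolute value at most ω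
    (heig : ∀ (lam : ℝ) (φ : Matrix (Fin n) (Fin n) ℝ), φ ≠ 0 → φ.transpose = -φ →
      (∀ i j, (1 / 2 : ℝ) * (∑ k, ∑ l, W i j k l * φ k l) = lam * φ i j) →
      |lam| ≤ ω) :
    ∀ i j k l, |W i j k l| ≤ 4 / 3 * ω := by
  obtain ⟨h1, h2, h3⟩ := hsym
  have hspec : ∀ φ ∈ twoForms n, |⟪curvatureOperator W φ, φ⟫| ≤ ω * ‖φ‖ ^ 2 := by
    refine fun φ hφ => abs_inner_curvatureOperator_le h1 h3 (fun μ ψ hψ hne hTψ => ?_) hφ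
    refine heig μ (Matrix.of fun i j => ψ (i, j)) ?_ ?_ fun i j => ?_
    · contrapose! hne
      ext ⟨i, j⟩
      exact congrFun₂ hne i j
    · ext i j
      exact hψ i j
    · simpa [curvatureOperator_apply] using congrArg (· (i, j)) hTψ
  have hQ := abs_sectionalForm_le h1 h2 hspec
  have hω : 0 ≤ ω := by
    simpa [inner_single_left, Fin.ext_iff] using
      (abs_nonneg _).trans (hQ (single ⟨0, by omega⟩ 1) (single ⟨1, by omega⟩ 1))
  have hQ' (u v : EuclideanSpace ℝ (Fin n)) : |sectionalForm W u v| ≤ ω * (‖u‖ ^ 2 * ‖v‖ ^ 2) :=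
    (hQ u v).trans (mul_le_mul_of_nonneg_left (sub_le_self _ (sq_nonneg _)) hω)
  exact abs_le_of_bianchi h2 h3 hbianchi (abs_add_le_of_abs_sectionalForm_le h3 hQ')
end

section
/- Let $W$ be a 4-tensor on $\mathbb{R}^n$ with curvature symmetries $W_{ijkl} = -W_{jikl} = -W_{ijlk} = W_{klij}$. Then $\langle W, W^2 + W^\sharp \rangle \le 5 |W|^3$, where $\langle W, W^2 + W^\sharp \rangle = \frac{1}{8}\left(\sum_{i,j,k,l,p,q} 4 W_{ijkl}W_{ipkq}W_{jplq} + W_{ijkl}W_{ijpq}W_{klpq}\right)$ and $|W|^2 = \frac{1}{4}\sum_{i,j,k,l} W_{ijkl}^2$. -/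
open Finset

lemma key_cs {α : Type*} [Fintype α] (M : α → α → ℝ) :
    ∑ a, ∑ b, ∑ c, M a b * M a c * M b c ≤
      Real.sqrt (∑ a, ∑ b, M a b ^ 2) ^ 3 := by
  set S : ℝ := ∑ a, ∑ b, M a b ^ 2 with hSdef
  have hS0 : 0 ≤ S := sum_nonneg fun _ _ => sum_nonneg fun _ _ => sq_nonneg _
  set L : ℝ := ∑ a, ∑ b, ∑ c, M a b * M a c * M b c with hLdef
  have hL : L = ∑ p : α × α, M p.1 p.2 * ∑ c, M p.1 c * M p.2 c := by
    rw [hLdef, Fintype.sum_prod_type]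
    refine Finset.sum_congr rfl fun a _ => Finset.sum_congr rfl fun b _ => ?_
    rw [Finset.mul_sum]
    exact Finset.sum_congr rfl fun c _ => by ring
  have hSp : (∑ p : α × α, M p.1 p.2 ^ 2) = S := by
    rw [hSdef, Fintype.sum_prod_type]
  have cs1 : L ^ 2 ≤ S * ∑ p : α × α, (∑ c, M p.1 c * M p.2 c) ^ 2 := by
    rw [hL, ← hSp]
    exact sum_mul_sq_le_sq_mul_sq _ _ _
  have cs2 : (∑ p : α × α, (∑ c, M p.1 c * M p.2 c) ^ 2) ≤ S * S := by
    have h1 : ∀ p : α × α, (∑ c, M p.1 c * M p.2 c) ^ 2 ≤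
        (∑ c, M p.1 c ^ 2) * ∑ c, M p.2 c ^ 2 :=
      fun p => sum_mul_sq_le_sq_mul_sq _ _ _
    calc (∑ p : α × α, (∑ c, M p.1 c * M p.2 c) ^ 2)
        ≤ ∑ p : α × α, (∑ c, M p.1 c ^ 2) * ∑ c, M p.2 c ^ 2 :=
          Finset.sum_le_sum fun p _ => h1 p
      _ = S * S := by
          rw [Fintype.sum_prod_type, hSdef, Finset.sum_mul]
          exact Finset.sum_congr rfl fun a _ => by rw [Finset.mul_sum]
  have hL2 : L ^ 2 ≤ S ^ 3 := by
    calc L ^ 2 ≤ S * (S * S) :=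
          le_trans cs1 (mul_le_mul_of_nonneg_left cs2 hS0)
      _ = S ^ 3 := by ring
  calc L ≤ |L| := le_abs_self L
    _ = Real.sqrt (L ^ 2) := (Real.sqrt_sq_eq_abs L).symm
    _ ≤ Real.sqrt (S ^ 3) := Real.sqrt_le_sqrt hL2
    _ = Real.sqrt S ^ 3 := by
        rw [show S ^ 3 = S ^ 2 * S by ring, Real.sqrt_mul (sq_nonneg S),
          Real.sqrt_sq hS0, show Real.sqrt S ^ 3 = S * Real.sqrt S by
            rw [pow_succ, Real.sq_sqrt hS0]]

theorem stmt_14 (n : ℕ) (W : Fin n → Fin n → Fin n → Fin n → ℝ)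
    (hsym : (∀ i j k l, W i j k l = -W j i k l) ∧ (∀ i j k l, W i j k l = -W i j l k) ∧
      (∀ i j k l, W i j k l = W k l i j)) :
    (1 / 8 : ℝ) * ((∑ i, ∑ j, ∑ k, ∑ l, ∑ p, ∑ q,
        4 * (W i j k l * W i p k q * W j p l q))
      + ∑ i, ∑ j, ∑ k, ∑ l, ∑ p, ∑ q, W i j k l * W i j p q * W k l p q) ≤
    5 * Real.sqrt ((1 / 4 : ℝ) * ∑ i, ∑ j, ∑ k, ∑ l, (W i j k l) ^ 2) ^ 3 := by
  set S : ℝ := ∑ i, ∑ j, ∑ k, ∑ l, (W i j k l) ^ 2 with hSdef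
  have hS0 : 0 ≤ S := sum_nonneg fun _ _ => sum_nonneg fun _ _ =>
    sum_nonneg fun _ _ => sum_nonneg fun _ _ => sq_nonneg _
  -- Matrix for the first cubic term
  set M1 : Fin n × Fin n → Fin n × Fin n → ℝ := fun a b => W a.1 b.1 a.2 b.2 with hM1
  set M2 : Fin n × Fin n → Fin n × Fin n → ℝ := fun a b => W a.1 a.2 b.1 b.2 with hM2
  have hA : (∑ i, ∑ j, ∑ k, ∑ l, ∑ p, ∑ q, W i j k l * W i p k q * W j p l q)
      = ∑ a, ∑ b, ∑ c, M1 a b * M1 a c * M1 b c := by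
    simp only [hM1, Fintype.sum_prod_type]
    exact Finset.sum_congr rfl fun i _ => Finset.sum_comm
  have hSA : (∑ a, ∑ b, M1 a b ^ 2) = S := by
    simp only [hM1, Fintype.sum_prod_type, hSdef]
    exact Finset.sum_congr rfl fun i _ => Finset.sum_comm
  have hB : (∑ i, ∑ j, ∑ k, ∑ l, ∑ p, ∑ q, W i j k l * W i j p q * W k l p q)
      = ∑ a, ∑ b, ∑ c, M2 a b * M2 a c * M2 b c := by
    simp only [hM2, Fintype.sum_prod_type]
  have hSB : (∑ a, ∑ b, M2 a b ^ 2) = S := by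
    simp only [hM2, Fintype.sum_prod_type, hSdef]
  have kA := key_cs M1
  have kB := key_cs M2
  rw [hSA] at kA
  rw [hSB] at kB
  have hfac : (∑ i, ∑ j, ∑ k, ∑ l, ∑ p, ∑ q, 4 * (W i j k l * W i p k q * W j p l q))
      = 4 * ∑ i, ∑ j, ∑ k, ∑ l, ∑ p, ∑ q, W i j k l * W i p k q * W j p l q := by
    simp only [← Finset.mul_sum]
  have hrhs : Real.sqrt ((1 / 4 : ℝ) * S) = Real.sqrt S / 2 := by
    rw [Real.sqrt_mul (by norm_num : (0:ℝ) ≤ 1/4) S,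
      show Real.sqrt (1/4 : ℝ) = 1/2 by
        rw [show (1/4 : ℝ) = (1/2)^2 by norm_num, Real.sqrt_sq (by norm_num)]]
    ring
  rw [hfac, hA, hB, hrhs]
  have h3 : 5 * (Real.sqrt S / 2) ^ 3 = 5 / 8 * Real.sqrt S ^ 3 := by ring
  rw [h3]
  linarith [kA, kB]
end

section
/- Let $x_1, \dots, x_{10}$ be real numbers with $\sum_i x_i = 0$. Then $3\sum_i x_i^3 \le \frac{8}{\sqrt{10}}\left(\sum_i x_i^2\right)^{3/2}$. -/
/-!
If `x₁, …, xₙ` sum to zero and `Q = ∑ xᵢ²`, Cauchy–Schwarz on the other `n - 1` coordinates gives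
`xᵢ ≤ M := √((n - 1) Q / n)` for every `i`. Hence `∑ (xᵢ - M)(xᵢ + m)² ≤ 0` for every `m`, and with
`m = M / (n - 1)` this expands to `∑ xᵢ³ ≤ (n - 2) / √(n (n - 1)) · Q^{3/2}`, equality holding at
`x = (M, -m, …, -m)`. For `n = 10` the constant is `8 / (3 √10)`.
-/

open Finset

variable {ι : Type*} [Fintype ι]

theorem card_mul_sq_le_of_sum_eq_zero [DecidableEq ι] {x : ι → ℝ} (hsum : ∑ j, x j = 0) (i : ι) :
    Fintype.card ι * x i ^ 2 ≤ (Fintype.card ι - 1) * ∑ j, x j ^ 2 := by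
  have hrest : ∑ j ∈ univ.erase i, x j = -x i := by
    linarith [add_sum_erase univ x (mem_univ i)]
  have hrest_sq : ∑ j ∈ univ.erase i, x j ^ 2 = ∑ j, x j ^ 2 - x i ^ 2 := by
    linarith [add_sum_erase univ (fun j ↦ x j ^ 2) (mem_univ i)]
  have hcs := sq_sum_le_card_mul_sum_sq (s := univ.erase i) (f := x)
  rw [hrest, hrest_sq, neg_sq, card_erase_of_mem (mem_univ i), card_univ,
    Nat.cast_sub (Fintype.card_pos_iff.mpr ⟨i⟩)] at hcs
  push_cast at hcs
  linarith

theorem sum_pow_three_le_of_forall_le {x : ι → ℝ} (hsum : ∑ i, x i = 0) {M : ℝ}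
    (hM : ∀ i, x i ≤ M) (m : ℝ) :
    ∑ i, x i ^ 3 ≤ (M - 2 * m) * ∑ i, x i ^ 2 + Fintype.card ι * M * m ^ 2 := by
  have hnonpos : ∑ i, (x i - M) * (x i + m) ^ 2 ≤ 0 :=
    sum_nonpos fun i _ ↦ mul_nonpos_of_nonpos_of_nonneg (by linarith [hM i]) (sq_nonneg _)
  have hexpand : ∑ i, (x i - M) * (x i + m) ^ 2 = ∑ i, x i ^ 3 + (2 * m - M) * ∑ i, x i ^ 2
      + (m ^ 2 - 2 * M * m) * ∑ i, x i - Fintype.card ι * M * m ^ 2 := by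
    rw [show Fintype.card ι * M * m ^ 2 = ∑ _i : ι, M * m ^ 2 by simp [mul_assoc], mul_sum,
      mul_sum, ← sum_add_distrib, ← sum_add_distrib, ← sum_sub_distrib]
    exact sum_congr rfl fun i _ ↦ by ring
  rw [hexpand, hsum] at hnonpos
  linarith

theorem sum_pow_three_le_of_sum_eq_zero {x : ι → ℝ} (hsum : ∑ i, x i = 0)
    (hn : 2 ≤ Fintype.card ι) :
    ∑ i, x i ^ 3 ≤ (Fintype.card ι - 2) / √(Fintype.card ι * (Fintype.card ι - 1))
      * √(∑ i, x i ^ 2) ^ 3 := by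
  classical
  have hn' : (2 : ℝ) ≤ Fintype.card ι := by exact_mod_cast hn
  set n : ℝ := (Fintype.card ι : ℝ)
  set Q := ∑ i, x i ^ 2
  set t := √Q
  have hQ : t ^ 2 = Q := Real.sq_sqrt (sum_nonneg fun i _ ↦ sq_nonneg _)
  set u := √(n * (n - 1))
  have hu : 0 < u := Real.sqrt_pos.mpr (by nlinarith)
  have hu2 : u ^ 2 = n * (n - 1) := Real.sq_sqrt (by nlinarith)
  have hM : ∀ i, x i ≤ (n - 1) * t / u := fun i ↦ by
    have hsq : x i ^ 2 ≤ ((n - 1) * t / u) ^ 2 := by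
      rw [div_pow, mul_pow, hQ, hu2, le_div_iff₀ (by nlinarith)]
      nlinarith [card_mul_sq_le_of_sum_eq_zero hsum i]
    exact (abs_le_of_sq_le_sq' hsq (div_nonneg (mul_nonneg (by linarith) (Real.sqrt_nonneg _))
      hu.le)).2
  calc ∑ i, x i ^ 3
      ≤ ((n - 1) * t / u - 2 * (t / u)) * Q + n * ((n - 1) * t / u) * (t / u) ^ 2 :=
        sum_pow_three_le_of_forall_le hsum hM _
    _ = (n - 2) / u * t ^ 3 := by
        rw [← hQ]
        field_simp
        linear_combination (-t ^ 3) * hu2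

theorem stmt_15 (x : Fin 10 → ℝ) (hsum : ∑ i, x i = 0) :
    3 * ∑ i, (x i) ^ 3 ≤ (8 / Real.sqrt 10) * Real.sqrt (∑ i, (x i) ^ 2) ^ 3 := by
  have h := sum_pow_three_le_of_sum_eq_zero hsum (by simp)
  have hroot : √((10 : ℝ) * (10 - 1)) = 3 * √10 := by
    rw [show (10 : ℝ) * (10 - 1) = 3 ^ 2 * 10 by norm_num, Real.sqrt_mul (by norm_num),
      Real.sqrt_sq (by norm_num)]
  rw [Fintype.card_fin, Nat.cast_ofNat, hroot] at h
  calc 3 * ∑ i, x i ^ 3 ≤ 3 * ((10 - 2) / (3 * √10) * √(∑ i, x i ^ 2) ^ 3) := by gcongr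
    _ = 8 / √10 * √(∑ i, x i ^ 2) ^ 3 := by field_simp; ring
end
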